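/- Let Φ(u) = Σ_{k≥0} Φ_k u^{-k} be a formal power series with gl(2n,ℂ) coefficients satisfying Φ(u)ᵗ = -Φ(-u) and Φ₀ = Q. Then there exists C(u) = 1 + C₁u⁻¹ + C₂u⁻² + ... with gl(2n,ℂ) coefficients such that Φ(u) = C(u)ᵗ Q C(-u). -/

import Mathlib

open Matrix PowerSeries

/-- `gl(2n,ℂ)`, indexed by `Fin 2 × Fin n` (two blocks of size `n`). -/
abbrev GLMat (n : ℕ) := Matrix (Fin 2 × Fin n) (Fin 2 × Fin n) ℂ

/-- The matrix `Q = [[0, Ĩ_n], [-Ĩ_n, 0]]` of the standard symplectic form. -/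
def Qmat (n : ℕ) : GLMat n := fun p q =>
  if p.1 = 0 ∧ q.1 = 1 ∧ (p.2 : ℕ) + (q.2 : ℕ) = n - 1 then 1
  else if p.1 = 1 ∧ q.1 = 0 ∧ (p.2 : ℕ) + (q.2 : ℕ) = n - 1 then -1
  else 0

/-- `A(u) ↦ A(-u)`: replace `u⁻¹` by `-u⁻¹`, i.e. the `M`-th coefficient `A_M`
becomes `(-1)^M A_M`. -/
noncomputable def altern {n : ℕ} (F : PowerSeries (GLMat n)) : PowerSeries (GLMat n) :=
  PowerSeries.mk fun M => (-1 : ℂ) ^ M • PowerSeries.coeff M F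

/-- Coefficientwise transpose of a matrix-valued formal power series. -/
noncomputable def Tser {n : ℕ} (F : PowerSeries (GLMat n)) : PowerSeries (GLMat n) :=
  PowerSeries.mk fun M => (PowerSeries.coeff M F)ᵀ

/-- The pointed gauge group `𝒢` of series with constant term `1`. -/
def pointedGauge (n : ℕ) : Set (PowerSeries (GLMat n)) :=
  {F | PowerSeries.constantCoeff F = 1}

/-- The map `σ : A(u) ↦ Q⁻¹ ((A(-u))ᵗ)⁻¹ Q`. -/
noncomputable def sigmaMap {n : ℕ} (F : PowerSeries (GLMat n)) : PowerSeries (GLMat n) :=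
  PowerSeries.C (Qmat n)⁻¹ * Ring.inverse (Tser (altern F)) * PowerSeries.C (Qmat n)

/-!
Write `C(u) = ∑ cₖ u⁻ᵏ`. The `u⁻ᴷ`-coefficient of `C(u)ᵀ Q C(-u)` is
`c_Kᵀ Q + (-1)ᴷ Q c_K` plus terms involving only `c₁, …, c_{K-1}`, so the `c_K` can be found
recursively: one has to solve `Dᵀ Q + (-1)ᴷ Q D = X`, where `X` is `Φ_K` minus the lower terms.
Every series `C(u)ᵀ Q C(-u)` satisfies the same symmetry `Ψ(u)ᵀ = -Ψ(-u)` as `Φ`, hence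
`Xᵀ = -(-1)ᴷ X`, and for such `X` the matrix `D = ½ (-1)ᴷ Q⁻¹ X` is a solution.
-/

open scoped Kronecker

namespace SkewPairing

open Finset

variable {ι R : Type*} [Fintype ι] [CommRing R]

lemma neg_one_pow_add_mul_neg_one_pow (i j : ℕ) :
    (-1 : R) ^ (i + j) * (-1) ^ j = (-1) ^ i := by
  rw [pow_add, mul_assoc, pow_mul_pow_eq_one j (by norm_num), mul_one]

noncomputable def skewCorrection [DecidableEq ι] [Invertible (2 : R)] (Q : Matrix ι ι R)
    (K : ℕ) (X : Matrix ι ι R) : Matrix ι ι R :=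
  (⅟(2 : R) * (-1) ^ K) • (Q⁻¹ * X)

lemma transpose_skewCorrection_mul_add [DecidableEq ι] [Invertible (2 : R)] {Q : Matrix ι ι R}
    (hQ : Qᵀ = -Q) (hQdet : IsUnit Q.det) {K : ℕ} {X : Matrix ι ι R}
    (hX : Xᵀ = -((-1 : R) ^ K • X)) :
    (skewCorrection Q K X)ᵀ * Q + (-1 : R) ^ K • (Q * skewCorrection Q K X) = X := by
  have hsq : (-1 : R) ^ K * (-1) ^ K = 1 := pow_mul_pow_eq_one K (by norm_num)
  have hQinv : (-Q)⁻¹ = -Q⁻¹ :=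
    inv_eq_left_inv (by rw [neg_mul_neg, nonsing_inv_mul _ hQdet])
  have hleft : (skewCorrection Q K X)ᵀ * Q = ⅟(2 : R) • X := by
    rw [skewCorrection, transpose_smul, transpose_mul, transpose_nonsing_inv, hQ, hQinv,
      hX, smul_mul_assoc, Matrix.mul_assoc]
    simp only [nonsing_inv_mul _ hQdet, Matrix.mul_neg, Matrix.neg_mul, neg_neg, smul_smul,
      mul_assoc, hsq, mul_one]
  have hright : (-1 : R) ^ K • (Q * skewCorrection Q K X) = ⅟(2 : R) • X := by
    rw [skewCorrection, mul_smul_comm, ← Matrix.mul_assoc, mul_nonsing_inv _ hQdet,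
      Matrix.one_mul, smul_smul, mul_left_comm, hsq, mul_one]
  rw [hleft, hright, ← add_smul, invOf_two_add_invOf_two, one_smul]

/-- The `u⁻ᴷ`-coefficient of `C(u)ᵀ Q C(-u)`, where `C(u) = ∑ c k u⁻ᵏ`. -/
def skewPairingCoeff (Q : Matrix ι ι R) (c : ℕ → Matrix ι ι R) (K : ℕ) : Matrix ι ι R :=
  ∑ p ∈ antidiagonal K, (-1 : R) ^ p.2 • ((c p.1)ᵀ * Q * c p.2)

lemma transpose_skewPairingCoeff {Q : Matrix ι ι R} (hQ : Qᵀ = -Q) (c : ℕ → Matrix ι ι R)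
    (K : ℕ) : (skewPairingCoeff Q c K)ᵀ = -((-1 : R) ^ K • skewPairingCoeff Q c K) := by
  rw [skewPairingCoeff, transpose_sum]
  conv_rhs => rw [← Nat.sum_antidiagonal_swap]
  rw [smul_sum, ← sum_neg_distrib]
  refine sum_congr rfl fun p hp => ?_
  rw [← mem_antidiagonal.mp hp, Prod.fst_swap, Prod.snd_swap, transpose_smul,
    transpose_mul, transpose_mul, transpose_transpose, hQ, smul_smul, add_comm,
    neg_one_pow_add_mul_neg_one_pow, Matrix.neg_mul, Matrix.mul_neg, smul_neg, Matrix.mul_assoc]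

lemma skewPairingCoeff_succ (Q : Matrix ι ι R) (c : ℕ → Matrix ι ι R) (K : ℕ) :
    skewPairingCoeff Q c (K + 1) = (c (K + 1))ᵀ * Q * c 0 +
      (-1 : R) ^ (K + 1) • ((c 0)ᵀ * Q * c (K + 1)) +
      ∑ i : Fin K, (-1 : R) ^ (K - i) • ((c (i + 1))ᵀ * Q * c (K - i)) := by
  rw [skewPairingCoeff, Nat.sum_antidiagonal_eq_sum_range_succ_mk, sum_range_succ,
    sum_range_succ',
    Fin.sum_univ_eq_sum_range (fun i => (-1 : R) ^ (K - i) • ((c (i + 1))ᵀ * Q * c (K - i)))]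
  simp only [Nat.sub_self, pow_zero, one_smul, Nat.sub_zero, Nat.add_sub_add_right]
  abel

/-- The sum is the part of `skewPairingCoeff Q c (K + 1)` not involving `c (K + 1)`
(see `skewPairingCoeff_succ`). -/
noncomputable def gaugeCoeff [DecidableEq ι] [Invertible (2 : R)] (Q : Matrix ι ι R)
    (Φ : ℕ → Matrix ι ι R) : ℕ → Matrix ι ι R
  | 0 => 1
  | K + 1 => skewCorrection Q (K + 1) (Φ (K + 1) - ∑ i : Fin K,
      (-1 : R) ^ (K - i) • ((gaugeCoeff Q Φ (i + 1))ᵀ * Q * gaugeCoeff Q Φ (K - i)))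

lemma skewPairingCoeff_gaugeCoeff [DecidableEq ι] [Invertible (2 : R)] {Q : Matrix ι ι R}
    (hQdet : IsUnit Q.det) {Φ : ℕ → Matrix ι ι R}
    (hΦ : ∀ K, (Φ K)ᵀ = -((-1 : R) ^ K • Φ K)) (hΦ0 : Φ 0 = Q) (K : ℕ) :
    skewPairingCoeff Q (gaugeCoeff Q Φ) K = Φ K := by
  have hQ : Qᵀ = -Q := by simpa [hΦ0] using hΦ 0
  cases K with
  | zero => simp [skewPairingCoeff, gaugeCoeff, hΦ0]
  | succ K =>
    set c := gaugeCoeff Q Φ with hc_def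
    set rest := ∑ i : Fin K, (-1 : R) ^ (K - i) • ((c (i + 1))ᵀ * Q * c (K - i))
    -- `rest` is a pairing coefficient, hence has the same symmetry as `Φ (K + 1)`
    have hrest : rest = skewPairingCoeff Q (Function.update c (K + 1) 0) (K + 1) := by
      rw [skewPairingCoeff_succ, Function.update_self, Function.update_of_ne (by omega)]
      simp only [transpose_zero, Matrix.zero_mul, Matrix.mul_zero, smul_zero, zero_add]
      refine sum_congr rfl fun i _ => ?_
      rw [Function.update_of_ne (by omega), Function.update_of_ne (by omega)]
    have hX : (Φ (K + 1) - rest)ᵀ = -((-1 : R) ^ (K + 1) • (Φ (K + 1) - rest)) := by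
      rw [transpose_sub, hΦ, hrest, transpose_skewPairingCoeff hQ, smul_sub, neg_sub_neg, neg_sub]
    have hc : c (K + 1) = skewCorrection Q (K + 1) (Φ (K + 1) - rest) := by
      rw [hc_def, gaugeCoeff]
    rw [skewPairingCoeff_succ, hc, show c 0 = 1 by rw [hc_def, gaugeCoeff], transpose_one,
      Matrix.mul_one, Matrix.one_mul, transpose_skewCorrection_mul_add hQ hQdet hX, sub_add_cancel]

end SkewPairing

open SkewPairing

lemma Qmat_eq_kronecker (n : ℕ) :
    Qmat n = !![0, 1; -1, 0] ⊗ₖ (Fin.revPerm : Equiv.Perm (Fin n)).permMatrix ℂ := by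
  ext ⟨a, i⟩ ⟨b, j⟩
  have hrev : (i : ℕ) + j = n - 1 ↔ Fin.rev i = j := by
    rw [Fin.ext_iff, Fin.val_rev]; omega
  fin_cases a <;> fin_cases b <;>
    simp [Qmat, kroneckerMap_apply, Equiv.Perm.permMatrix, PEquiv.toMatrix_apply, hrev]

lemma Qmat_mul_self (n : ℕ) : Qmat n * Qmat n = -1 := by
  have hA : !![(0 : ℂ), 1; -1, 0] * !![0, 1; -1, 0] = -1 := by
    simp [Matrix.one_fin_two]
  have hJ : (Fin.revPerm : Equiv.Perm (Fin n)).permMatrix ℂ * Fin.revPerm.permMatrix ℂ = 1 := by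
    rw [← Matrix.permMatrix_mul, show Fin.revPerm * Fin.revPerm = 1 from Equiv.ext Fin.rev_rev,
      Matrix.permMatrix_one]
  rw [Qmat_eq_kronecker, ← mul_kronecker_mul, hA, hJ,
    ← neg_one_smul ℂ (1 : Matrix (Fin 2) (Fin 2) ℂ), smul_kronecker, one_kronecker_one,
    neg_one_smul]

lemma isUnit_det_Qmat (n : ℕ) : IsUnit (Qmat n).det :=
  isUnit_det_of_right_inverse (B := -Qmat n) (by rw [Matrix.mul_neg, Qmat_mul_self, neg_neg])

lemma coeff_Tser_mul_C_mul_altern {n : ℕ} (Q : GLMat n) (C : PowerSeries (GLMat n)) (K : ℕ) :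
    coeff K (Tser C * PowerSeries.C Q * altern C) =
      skewPairingCoeff Q (fun k => coeff k C) K := by
  rw [coeff_mul, skewPairingCoeff]
  refine Finset.sum_congr rfl fun p _ => ?_
  rw [coeff_mul_C, Tser, altern, coeff_mk, coeff_mk, mul_smul_comm]

lemma transpose_coeff_of_Tser_eq_neg_altern {n : ℕ} {F : PowerSeries (GLMat n)}
    (hF : Tser F = -altern F) (K : ℕ) : (coeff K F)ᵀ = -((-1 : ℂ) ^ K • coeff K F) := by
  simpa [Tser, altern] using congrArg (coeff K) hF

/-- if `Φ(u) = Σ Φ_k u^{-k}` has `gl(2n,ℂ)` coefficients and satisfies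
`Φ(u)ᵗ = -Φ(-u)` and `Φ₀ = Q`, then there exists `C(u) = 1 + C₁u⁻¹ + ⋯` with
`Φ(u) = C(u)ᵗ Q C(-u)` (transitivity of the pointed gauge group on skew pairings). -/
theorem gauge_transitive_on_skew_pairings (n : ℕ) (Phi : PowerSeries (GLMat n))
    (hskew : Tser Phi = -(altern Phi))
    (h0 : PowerSeries.constantCoeff Phi = Qmat n) :
    ∃ C : PowerSeries (GLMat n), PowerSeries.constantCoeff C = 1 ∧
      Phi = Tser C * PowerSeries.C (Qmat n) * altern C := by
  have hPhi0 : coeff 0 Phi = Qmat n := by rw [coeff_zero_eq_constantCoeff_apply, h0]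
  refine ⟨mk (gaugeCoeff (Qmat n) fun k => coeff k Phi), ?_, ?_⟩
  · rw [← coeff_zero_eq_constantCoeff_apply, coeff_mk, gaugeCoeff]
  · refine PowerSeries.ext fun K => ?_
    rw [coeff_Tser_mul_C_mul_altern]
    simp only [coeff_mk]
    exact (skewPairingCoeff_gaugeCoeff (isUnit_det_Qmat n)
      (transpose_coeff_of_Tser_eq_neg_altern hskew) hPhi0 K).symm
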